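/- Let U be a bounded smooth domain in ℝ⁵ = ℍ×ℝ whose closure does not contain the origin, let a ∈ ℝ and let f : ℝ → ℝ be continuous. (i) If v ∈ C²(U) ∩ C(closure U) satisfies −Δv(x) + (a/(4|x|))v(x) = (1/(4|x|))f(v(x)) for all x ∈ U and v = 0 on ∂U, then u := v ∘ π belongs to C²(Ω) ∩ C(closure Ω), where Ω := π^{−1}(U), and satisfies −Δu + au = f(u) in Ω and u = 0 on ∂Ω. (ii) Conversely, if v : U → ℝ is of class C² and u := v ∘ π satisfies −Δu + au = f(u) in Ω, then v satisfies −Δv + (a/(4|x|))v = (1/(4|x|))f(v) in U. -/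

import Mathlib

/-- The Laplacian (trace of the second derivative) of a real-valued function on a
finite-dimensional Euclidean space, computed in the standard orthonormal coordinates. -/
noncomputable def lap {ι : Type*} [Fintype ι] [DecidableEq ι]
    (u : EuclideanSpace ℝ ι → ℝ) (x : EuclideanSpace ℝ ι) : ℝ :=
  ∑ i, iteratedFDeriv ℝ 2 u x ![EuclideanSpace.single i 1, EuclideanSpace.single i 1]

/-- A bounded smooth domain: a nonempty bounded open set, each of whose boundary points
admits a smooth local defining function with nonvanishing differential (so that the
boundary is a C^∞ hypersurface). -/
structure IsSmoothDomain {E : Type*} [NormedAddCommGroup E] [NormedSpace ℝ E]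
    (Ω : Set E) : Prop where
  isOpen : IsOpen Ω
  isBounded : Bornology.IsBounded Ω
  nonempty : Ω.Nonempty
  smooth_boundary : ∀ x ∈ frontier Ω, ∃ f : E → ℝ, ContDiff ℝ (⊤ : ℕ∞) f ∧
    fderiv ℝ f x ≠ 0 ∧ ∀ᶠ y in nhds x, (y ∈ Ω ↔ f y < 0)

/-- The first quaternion coordinate of a point of ℝ⁸ = ℍ×ℍ. -/
def quat1 (x : EuclideanSpace ℝ (Fin 8)) : Quaternion ℝ := ⟨x 0, x 1, x 2, x 3⟩

/-- The second quaternion coordinate of a point of ℝ⁸ = ℍ×ℍ. -/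
def quat2 (x : EuclideanSpace ℝ (Fin 8)) : Quaternion ℝ := ⟨x 4, x 5, x 6, x 7⟩

/-- The Hopf map π : ℝ⁸ = ℍ×ℍ → ℝ⁵ = ℍ×ℝ, π(z₁,z₂) = (2·conj(z₁)·z₂, |z₁|² − |z₂|²). -/
noncomputable def hopfH (x : EuclideanSpace ℝ (Fin 8)) : EuclideanSpace ℝ (Fin 5) :=
  WithLp.toLp 2 ![(2 * star (quat1 x) * quat2 x).re,
    (2 * star (quat1 x) * quat2 x).imI,
    (2 * star (quat1 x) * quat2 x).imJ,
    (2 * star (quat1 x) * quat2 x).imK,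
    ‖quat1 x‖ ^ 2 - ‖quat2 x‖ ^ 2]

/-! The Hopf map is quadratic, `π z = ½ B(z, z)` for a symmetric bilinear `B`, so `Dπ(z) = B(z, ·)`
and `D²π = B`. Its Jacobian satisfies `J Jᵀ = 4|z|² I` (π is horizontally conformal) and
`∑ᵢ B(eᵢ, eᵢ) = 0` (π is harmonic), so the second-order chain rule collapses to
`Δ(v ∘ π)(z) = 4|z|² Δv(π z) = 4|π z| Δv(π z)`. Multiplying the equation for `v` by `4|x| ≠ 0`
gives the equation for `v ∘ π`, and conversely thanks to the surjectivity of `π`; the boundary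
conditions follow from the continuity of `π`. -/

noncomputable section

open Matrix
open WithLp (toLp ofLp)

section SecondDerivative

variable {𝕜 : Type*} [NontriviallyNormedField 𝕜]
  {E F G : Type*} [NormedAddCommGroup E] [NormedSpace 𝕜 E] [NormedAddCommGroup F] [NormedSpace 𝕜 F]
  [NormedAddCommGroup G] [NormedSpace 𝕜 G]

theorem fderiv_fderiv_comp_apply {v : F → G} {q : E → F} {z : E}
    (hv : ContDiffAt 𝕜 2 v (q z)) (hq : ContDiffAt 𝕜 2 q z) (e e' : E) :
    fderiv 𝕜 (fderiv 𝕜 (v ∘ q)) z e e' =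
      fderiv 𝕜 (fderiv 𝕜 v) (q z) (fderiv 𝕜 q z e) (fderiv 𝕜 q z e') +
        fderiv 𝕜 v (q z) (fderiv 𝕜 (fderiv 𝕜 q) z e e') := by
  have hfd : fderiv 𝕜 (v ∘ q) =ᶠ[nhds z] fun y => (fderiv 𝕜 v (q y)).comp (fderiv 𝕜 q y) := by
    filter_upwards [hq.eventually (by simp), hq.continuousAt.eventually (hv.eventually (by simp))]
      with y hqy hvy
    exact fderiv_comp y (hvy.differentiableAt (by simp)) (hqy.differentiableAt (by simp))
  have hDv : HasFDerivAt (fun y => fderiv 𝕜 v (q y)) _ z :=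
    ((hv.fderiv_right (by norm_num)).differentiableAt one_ne_zero).hasFDerivAt.comp z
      (hq.differentiableAt (by simp)).hasFDerivAt
  have hDq := ((hq.fderiv_right (by norm_num)).differentiableAt one_ne_zero).hasFDerivAt
  rw [hfd.fderiv_eq, (hDv.clm_comp hDq).fderiv]
  simp only [_root_.add_apply, ContinuousLinearMap.comp_apply,
    ContinuousLinearMap.compL_apply, ContinuousLinearMap.flip_apply]
  exact add_comm _ _

end SecondDerivative

section QuadraticMap

variable {𝕜 : Type*} [RCLike 𝕜] {E F : Type*} [NormedAddCommGroup E] [NormedSpace 𝕜 E]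
  [NormedAddCommGroup F] [NormedSpace 𝕜 F] {B : E →L[𝕜] E →L[𝕜] F}

theorem hasFDerivAt_half_apply_self (hB : ∀ x y, B x y = B y x) (z : E) :
    HasFDerivAt (fun x => (2 : 𝕜)⁻¹ • B x x) (B z) z := by
  refine ((B.hasFDerivAt_of_bilinear (hasFDerivAt_id z) (hasFDerivAt_id z)).const_smul
    (2 : 𝕜)⁻¹).congr_fderiv ?_
  ext h
  simp only [id_eq, ContinuousLinearMap.precompR_apply, ContinuousLinearMap.compL_apply,
    ContinuousLinearMap.comp_id, _root_.add_apply, _root_.smul_apply,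
    ContinuousLinearMap.precompL_apply, ContinuousLinearMap.id_apply, hB h z]
  rw [← two_smul 𝕜, smul_smul, inv_mul_cancel₀ two_ne_zero, one_smul]

theorem fderiv_half_apply_self (hB : ∀ x y, B x y = B y x) :
    fderiv 𝕜 (fun x => (2 : 𝕜)⁻¹ • B x x) = B :=
  funext fun z => (hasFDerivAt_half_apply_self hB z).fderiv

end QuadraticMap

section Laplacian

variable {ι κ : Type*} [Fintype ι] [Fintype κ]

theorem lap_eq_sum_fderiv_fderiv [DecidableEq ι] (u : EuclideanSpace ℝ ι → ℝ)
    (x : EuclideanSpace ℝ ι) :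
    lap u x = ∑ i, fderiv ℝ (fderiv ℝ u) x (EuclideanSpace.single i 1)
      (EuclideanSpace.single i 1) := by
  simp [lap, iteratedFDeriv_two_apply]

theorem lap_comp [DecidableEq ι] {v : EuclideanSpace ℝ κ → ℝ}
    {q : EuclideanSpace ℝ ι → EuclideanSpace ℝ κ} {z : EuclideanSpace ℝ ι}
    (hv : ContDiffAt ℝ 2 v (q z)) (hq : ContDiffAt ℝ 2 q z) :
    lap (v ∘ q) z =
      ∑ i, fderiv ℝ (fderiv ℝ v) (q z) (fderiv ℝ q z (EuclideanSpace.single i 1))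
          (fderiv ℝ q z (EuclideanSpace.single i 1)) +
        fderiv ℝ v (q z) (∑ i, fderiv ℝ (fderiv ℝ q) z (EuclideanSpace.single i 1)
          (EuclideanSpace.single i 1)) := by
  simp only [lap_eq_sum_fderiv_fderiv, fderiv_fderiv_comp_apply hv hq, Finset.sum_add_distrib,
    map_sum]

theorem sum_apply_col_col_of_mul_transpose [DecidableEq κ] {G : Type*} [NormedAddCommGroup G]
    [NormedSpace ℝ G]
    (H : EuclideanSpace ℝ κ →L[ℝ] EuclideanSpace ℝ κ →L[ℝ] G) {A : Matrix κ ι ℝ} {c : ℝ}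
    (hA : A * Aᵀ = c • 1) :
    ∑ i, H (toLp 2 (A.col i)) (toLp 2 (A.col i)) =
      c • ∑ j, H (EuclideanSpace.single j 1) (EuclideanSpace.single j 1) := by
  have hcol (i : ι) : toLp 2 (A.col i) = ∑ j, A j i • EuclideanSpace.single j (1 : ℝ) := by
    ext k
    simp [Pi.single_apply]
  calc ∑ i, H (toLp 2 (A.col i)) (toLp 2 (A.col i))
      = ∑ k, ∑ j, (A * Aᵀ) j k • H (EuclideanSpace.single j 1) (EuclideanSpace.single k 1) := by
        simp only [hcol, map_sum, map_smul]
        rw [Finset.sum_comm]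
        refine Finset.sum_congr rfl fun k _ => ?_
        simp only [_root_.sum_apply, _root_.smul_apply, mul_apply, transpose_apply,
          Finset.sum_smul, Finset.smul_sum, smul_smul]
        rw [Finset.sum_comm]
        simp only [mul_comm]
    _ = c • ∑ j, H (EuclideanSpace.single j 1) (EuclideanSpace.single j 1) := by
        simp [hA, one_apply, ite_smul, Finset.smul_sum]

end Laplacian

section Hopf

def hopfJacobian (z : EuclideanSpace ℝ (Fin 8)) : Matrix (Fin 5) (Fin 8) ℝ :=
  2 • !![z 4, z 5, z 6, z 7, z 0, z 1, z 2, z 3;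
    z 5, -z 4, -z 7, z 6, -z 1, z 0, z 3, -z 2;
    z 6, z 7, -z 4, -z 5, -z 2, -z 3, z 0, z 1;
    z 7, -z 6, z 5, -z 4, -z 3, z 2, -z 1, z 0;
    z 0, z 1, z 2, z 3, -z 4, -z 5, -z 6, -z 7]

theorem hopfJacobian_mulVec_comm (z w : EuclideanSpace ℝ (Fin 8)) :
    hopfJacobian z *ᵥ ofLp w = hopfJacobian w *ᵥ ofLp z := by
  ext j
  fin_cases j <;> simp [hopfJacobian, mulVec, dotProduct, Fin.sum_univ_eight] <;> ring

theorem hopfJacobian_mul_transpose (z : EuclideanSpace ℝ (Fin 8)) :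
    hopfJacobian z * (hopfJacobian z)ᵀ = (4 * ‖z‖ ^ 2) • 1 := by
  rw [EuclideanSpace.real_norm_sq_eq, Fin.sum_univ_eight]
  ext j k
  fin_cases j <;> fin_cases k <;> simp [hopfJacobian, mul_apply, Fin.sum_univ_eight] <;> ring

def hopfBilin :
    EuclideanSpace ℝ (Fin 8) →L[ℝ] EuclideanSpace ℝ (Fin 8) →L[ℝ] EuclideanSpace ℝ (Fin 5) :=
  LinearMap.toContinuousLinearMap
    { toFun := fun z => LinearMap.toContinuousLinearMap (toLpLin 2 2 (hopfJacobian z))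
      map_add' := fun z z' => by
        ext w : 1
        simp [toLpLin_apply, hopfJacobian_mulVec_comm _ w, mulVec_add]
      map_smul' := fun c z => by
        ext w : 1
        simp [toLpLin_apply, hopfJacobian_mulVec_comm _ w, mulVec_smul] }

theorem hopfBilin_apply (z w : EuclideanSpace ℝ (Fin 8)) :
    hopfBilin z w = toLp 2 (hopfJacobian z *ᵥ ofLp w) :=
  rfl

theorem hopfBilin_comm (z w : EuclideanSpace ℝ (Fin 8)) : hopfBilin z w = hopfBilin w z := by
  rw [hopfBilin_apply, hopfBilin_apply, hopfJacobian_mulVec_comm]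

theorem sum_hopfBilin_single_single :
    ∑ i, hopfBilin (EuclideanSpace.single i 1) (EuclideanSpace.single i 1) = 0 := by
  ext j
  fin_cases j <;> simp [hopfBilin_apply, hopfJacobian, Fin.sum_univ_eight]

theorem Quaternion.norm_sq_eq (q : Quaternion ℝ) :
    ‖q‖ ^ 2 = q.re ^ 2 + q.imI ^ 2 + q.imJ ^ 2 + q.imK ^ 2 := by
  rw [sq, ← Quaternion.normSq_eq_norm_mul_self, Quaternion.normSq_def']

theorem hopfH_eq : hopfH = fun z => (2 : ℝ)⁻¹ • hopfBilin z z := by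
  ext z j
  fin_cases j <;>
    simp [hopfH, two_mul, add_mul, Quaternion.re_mul, Quaternion.imI_mul, Quaternion.imJ_mul,
      Quaternion.imK_mul, Quaternion.norm_sq_eq] <;>
    simp [quat1, quat2, hopfBilin_apply, hopfJacobian, dotProduct, Fin.sum_univ_eight] <;>
    ring

theorem norm_hopfH (z : EuclideanSpace ℝ (Fin 8)) : ‖hopfH z‖ = ‖z‖ ^ 2 := by
  have key : ‖hopfH z‖ ^ 2 = (‖z‖ ^ 2) ^ 2 := by
    simp only [EuclideanSpace.real_norm_sq_eq, Fin.sum_univ_eight, Fin.sum_univ_five,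
      hopfH_eq]
    simp [hopfBilin_apply, hopfJacobian, dotProduct, Fin.sum_univ_eight]
    ring
  exact (pow_left_inj₀ (norm_nonneg _) (by positivity) two_ne_zero).1 key

theorem contDiff_hopfH {n : WithTop ℕ∞} : ContDiff ℝ n hopfH := by
  rw [hopfH_eq]
  exact (hopfBilin.contDiff.clm_apply contDiff_id).const_smul _

theorem fderiv_hopfH : fderiv ℝ hopfH = hopfBilin := by
  rw [hopfH_eq, fderiv_half_apply_self hopfBilin_comm]

theorem lap_comp_hopfH {v : EuclideanSpace ℝ (Fin 5) → ℝ} {z : EuclideanSpace ℝ (Fin 8)}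
    (hv : ContDiffAt ℝ 2 v (hopfH z)) :
    lap (v ∘ hopfH) z = 4 * ‖hopfH z‖ * lap v (hopfH z) := by
  have hcol (i : Fin 8) :
      hopfBilin z (EuclideanSpace.single i 1) = toLp 2 ((hopfJacobian z).col i) := by
    simp [hopfBilin_apply]
  rw [lap_comp hv contDiff_hopfH.contDiffAt, fderiv_hopfH, hopfBilin.fderiv,
    sum_hopfBilin_single_single, map_zero, add_zero]
  simp only [hcol]
  rw [sum_apply_col_col_of_mul_transpose _ (hopfJacobian_mul_transpose z), norm_hopfH,
    lap_eq_sum_fderiv_fderiv, smul_eq_mul]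

theorem hopfH_toLp_apply (z : Fin 8 → ℝ) :
    hopfH (toLp 2 z) = toLp 2 ![2 * (z 0 * z 4 + z 1 * z 5 + z 2 * z 6 + z 3 * z 7),
      2 * (z 0 * z 5 - z 1 * z 4 - z 2 * z 7 + z 3 * z 6),
      2 * (z 0 * z 6 + z 1 * z 7 - z 2 * z 4 - z 3 * z 5),
      2 * (z 0 * z 7 - z 1 * z 6 + z 2 * z 5 - z 3 * z 4),
      z 0 ^ 2 + z 1 ^ 2 + z 2 ^ 2 + z 3 ^ 2 - (z 4 ^ 2 + z 5 ^ 2 + z 6 ^ 2 + z 7 ^ 2)] := by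
  ext j
  fin_cases j <;>
    simp [hopfH_eq, hopfBilin_apply, hopfJacobian, dotProduct, Fin.sum_univ_eight] <;>
    ring

theorem hopfH_surjective : Function.Surjective hopfH := by
  intro x
  have hr : ‖x‖ ^ 2 = x 0 ^ 2 + x 1 ^ 2 + x 2 ^ 2 + x 3 ^ 2 + x 4 ^ 2 := by
    rw [EuclideanSpace.real_norm_sq_eq, Fin.sum_univ_five]
  have hx4 : -‖x‖ ≤ x 4 := (abs_le_of_sq_le_sq' (by nlinarith) (norm_nonneg x)).1
  rcases (neg_le_iff_add_nonneg.1 hx4).eq_or_lt with h | h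
  · have hsum : x 0 ^ 2 + x 1 ^ 2 + x 2 ^ 2 + x 3 ^ 2 = 0 := by
      rw [show x 4 = -‖x‖ by linarith] at hr
      linarith
    have h0123 : x 0 = 0 ∧ x 1 = 0 ∧ x 2 = 0 ∧ x 3 = 0 := by
      refine ⟨?_, ?_, ?_, ?_⟩ <;>
        nlinarith [sq_nonneg (x 0), sq_nonneg (x 1), sq_nonneg (x 2), sq_nonneg (x 3)]
    refine ⟨toLp 2 ![0, 0, 0, 0, √‖x‖, 0, 0, 0], ?_⟩
    ext j
    fin_cases j <;> simp [hopfH_toLp_apply, h0123, Real.sq_sqrt (norm_nonneg x)]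
    linarith
  · -- `z₁ = s` real and `z₂ = w / (2 s)`, where `x = (w, x₄)` and `s² = (|x| + x₄) / 2`
    set s := √((‖x‖ + x 4) / 2)
    have hs : 0 < s := Real.sqrt_pos.2 (by linarith)
    have hs2 : s ^ 2 = (‖x‖ + x 4) / 2 := Real.sq_sqrt (by linarith)
    refine ⟨toLp 2 ![s, 0, 0, 0, x 0 / (2 * s), x 1 / (2 * s), x 2 / (2 * s), x 3 / (2 * s)], ?_⟩
    ext j
    fin_cases j <;> simp [hopfH_toLp_apply] <;> field_simp
    linear_combination (4 * s ^ 2 + 2 * ‖x‖ - 2 * x 4) * hs2 + hr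

end Hopf

theorem neg_add_div_mul_eq_one_div_mul_iff {r L a w F : ℝ} (hr : r ≠ 0) :
    -L + a / (4 * r) * w = 1 / (4 * r) * F ↔ -(4 * r * L) + a * w = F := by
  constructor <;> intro h
  · field_simp at h
    linear_combination h
  · field_simp
    linear_combination h

end

theorem stmt_8_general (U : Set (EuclideanSpace ℝ (Fin 5))) (hU : IsSmoothDomain U)
    (h0 : (0 : EuclideanSpace ℝ (Fin 5)) ∉ closure U) (a : ℝ)
    (f : ℝ → ℝ) :
    (∀ v : EuclideanSpace ℝ (Fin 5) → ℝ,
      ContDiffOn ℝ 2 v U → ContinuousOn v (closure U) →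
      (∀ x ∈ U, - lap v x + (a / (4 * ‖x‖)) * v x = (1 / (4 * ‖x‖)) * f (v x)) →
      (∀ x ∈ frontier U, v x = 0) →
        (ContDiffOn ℝ 2 (v ∘ hopfH) (hopfH ⁻¹' U) ∧
         ContinuousOn (v ∘ hopfH) (closure (hopfH ⁻¹' U)) ∧
         (∀ z ∈ hopfH ⁻¹' U, - lap (v ∘ hopfH) z + a * (v ∘ hopfH) z = f ((v ∘ hopfH) z)) ∧
         (∀ z ∈ frontier (hopfH ⁻¹' U), (v ∘ hopfH) z = 0))) ∧
    (∀ v : EuclideanSpace ℝ (Fin 5) → ℝ, ContDiffOn ℝ 2 v U →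
      (∀ z ∈ hopfH ⁻¹' U, - lap (v ∘ hopfH) z + a * (v ∘ hopfH) z = f ((v ∘ hopfH) z)) →
      ∀ x ∈ U, - lap v x + (a / (4 * ‖x‖)) * v x = (1 / (4 * ‖x‖)) * f (v x)) := by
  have hπ : Continuous hopfH := (contDiff_hopfH (n := 0)).continuous
  have hlap {v : EuclideanSpace ℝ (Fin 5) → ℝ} (hv : ContDiffOn ℝ 2 v U) {z} (hz : hopfH z ∈ U) :
      lap (v ∘ hopfH) z = 4 * ‖hopfH z‖ * lap v (hopfH z) :=
    lap_comp_hopfH (hv.contDiffAt (hU.isOpen.mem_nhds hz))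
  have hnorm {x} (hx : x ∈ U) : ‖x‖ ≠ 0 :=
    norm_ne_zero_iff.2 (ne_of_mem_of_not_mem (subset_closure hx) h0)
  refine ⟨fun v hv hvc hpde hbd => ⟨?_, ?_, fun z hz => ?_, fun z hz => ?_⟩,
    fun v hv hpde x hx => ?_⟩
  · exact hv.comp contDiff_hopfH.contDiffOn (Set.mapsTo_preimage _ _)
  · exact hvc.comp hπ.continuousOn fun z hz => hπ.closure_preimage_subset U hz
  · rw [hlap hv hz]
    exact (neg_add_div_mul_eq_one_div_mul_iff (hnorm hz)).1 (hpde _ hz)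
  · exact hbd _ (hπ.frontier_preimage_subset U hz)
  · obtain ⟨z, rfl⟩ := hopfH_surjective x
    have hpde_z := hpde z hx
    rw [hlap hv hx] at hpde_z
    exact (neg_add_div_mul_eq_one_div_mul_iff (hnorm hx)).2 hpde_z

/-- the reduction via the Hopf map ℝ⁸ → ℝ⁵. -/
theorem stmt_8 (U : Set (EuclideanSpace ℝ (Fin 5))) (hU : IsSmoothDomain U)
    (h0 : (0 : EuclideanSpace ℝ (Fin 5)) ∉ closure U) (a : ℝ)
    (f : ℝ → ℝ) (hf : Continuous f) :
    (∀ v : EuclideanSpace ℝ (Fin 5) → ℝ,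
      ContDiffOn ℝ 2 v U → ContinuousOn v (closure U) →
      (∀ x ∈ U, - lap v x + (a / (4 * ‖x‖)) * v x = (1 / (4 * ‖x‖)) * f (v x)) →
      (∀ x ∈ frontier U, v x = 0) →
        (ContDiffOn ℝ 2 (v ∘ hopfH) (hopfH ⁻¹' U) ∧
         ContinuousOn (v ∘ hopfH) (closure (hopfH ⁻¹' U)) ∧
         (∀ z ∈ hopfH ⁻¹' U, - lap (v ∘ hopfH) z + a * (v ∘ hopfH) z = f ((v ∘ hopfH) z)) ∧
         (∀ z ∈ frontier (hopfH ⁻¹' U), (v ∘ hopfH) z = 0))) ∧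
    (∀ v : EuclideanSpace ℝ (Fin 5) → ℝ, ContDiffOn ℝ 2 v U →
      (∀ z ∈ hopfH ⁻¹' U, - lap (v ∘ hopfH) z + a * (v ∘ hopfH) z = f ((v ∘ hopfH) z)) →
      ∀ x ∈ U, - lap v x + (a / (4 * ‖x‖)) * v x = (1 / (4 * ‖x‖)) * f (v x)) :=
  stmt_8_general U hU h0 a f
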